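/- arXiv:2310.00968 — 8 statements merged into one kernel-verified Lean document; each statement's English description precedes it below -/
import Mathlib

section
/- Let μ: ℝ → ℝ be differentiable with derivative bounded below by κ > 0. For any vectors θ₁, θ₂ ∈ ℝ^d, vectors z_s ∈ ℝ^d and weights w_s > 0 (s in a finite index set S), define G(θ) = λθ + ∑_{s∈S} w_s² (μ(⟨z_s, θ⟩) − μ(⟨z_s, θ*⟩)) z_s for some fixed θ* and λ > 0. Then G is injective. -/
open scoped RealInnerProductSpace

theorem stmt_0 {d : ℕ} {ι : Type*} (S : Finset ι)
    (μ : ℝ → ℝ) (κ lam : ℝ) (hκ : 0 < κ) (hlam : 0 < lam)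
    (hμ : Differentiable ℝ μ) (hderiv : ∀ x : ℝ, κ ≤ deriv μ x)
    (z : ι → EuclideanSpace ℝ (Fin d)) (w : ι → ℝ) (hw : ∀ s ∈ S, 0 < w s)
    (θstar : EuclideanSpace ℝ (Fin d))
    (G : EuclideanSpace ℝ (Fin d) → EuclideanSpace ℝ (Fin d))
    (hG : ∀ θ, G θ = lam • θ +
      ∑ s ∈ S, ((w s) ^ 2 * (μ ⟪z s, θ⟫ - μ ⟪z s, θstar⟫)) • z s) :
    Function.Injective G := by
  have hmono : Monotone μ :=
    monotone_of_deriv_nonneg hμ (fun x => le_of_lt (lt_of_lt_of_le hκ (hderiv x)))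
  have key : ∀ a b : ℝ, 0 ≤ (μ a - μ b) * (a - b) := by
    intro a b
    rcases le_total a b with hab | hab
    · nlinarith [sub_nonpos.mpr (hmono hab), sub_nonpos.mpr hab]
    · exact mul_nonneg (sub_nonneg.mpr (hmono hab)) (sub_nonneg.mpr hab)
  intro θ₁ θ₂ h
  have h0 : (0:ℝ) = ⟪G θ₁ - G θ₂, θ₁ - θ₂⟫ := by rw [h, sub_self, inner_zero_left]
  have expand : ⟪G θ₁ - G θ₂, θ₁ - θ₂⟫ =
      lam * ‖θ₁ - θ₂‖ ^ 2 +
      ∑ s ∈ S, (w s) ^ 2 *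
        ((μ ⟪z s, θ₁⟫ - μ ⟪z s, θ₂⟫) * (⟪z s, θ₁⟫ - ⟪z s, θ₂⟫)) := by
    rw [hG, hG]
    rw [show lam • θ₁ + ∑ s ∈ S, ((w s) ^ 2 * (μ ⟪z s, θ₁⟫ - μ ⟪z s, θstar⟫)) • z s
        - (lam • θ₂ + ∑ s ∈ S, ((w s) ^ 2 * (μ ⟪z s, θ₂⟫ - μ ⟪z s, θstar⟫)) • z s)
        = lam • (θ₁ - θ₂) + ∑ s ∈ S,
            ((w s) ^ 2 * (μ ⟪z s, θ₁⟫ - μ ⟪z s, θstar⟫)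
             - (w s) ^ 2 * (μ ⟪z s, θ₂⟫ - μ ⟪z s, θstar⟫)) • z s by
      simp only [sub_smul, Finset.sum_sub_distrib, smul_sub]
      abel]
    rw [inner_add_left, real_inner_smul_left, sum_inner,
      real_inner_self_eq_norm_sq]
    congr 1
    apply Finset.sum_congr rfl
    intro s _
    rw [real_inner_smul_left, inner_sub_right]
    ring
  have hsum : 0 ≤ ∑ s ∈ S, (w s) ^ 2 *
      ((μ ⟪z s, θ₁⟫ - μ ⟪z s, θ₂⟫) * (⟪z s, θ₁⟫ - ⟪z s, θ₂⟫)) :=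
    Finset.sum_nonneg fun s _ => mul_nonneg (sq_nonneg _) (key _ _)
  have hnorm : lam * ‖θ₁ - θ₂‖ ^ 2 ≤ 0 := by
    nlinarith [expand ▸ h0.symm]
  have hz : θ₁ - θ₂ = 0 := by
    have h1 := norm_nonneg (θ₁ - θ₂)
    have hn : ‖θ₁ - θ₂‖ = 0 := by
      by_contra hne
      have hpos : 0 < ‖θ₁ - θ₂‖ := lt_of_le_of_ne h1 (Ne.symm hne)
      exact absurd hnorm (not_le.mpr (mul_pos hlam (pow_pos hpos 2)))
    simpa using hn
  exact sub_eq_zero.mp hz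
end

section
/- Let μ: ℝ → ℝ be differentiable with μ'(x) ≥ κ > 0 for all x, let λ > 0, and define G: ℝ^d → ℝ^d by G(θ) = λθ + ∑_{s∈S} w_s² (μ(⟨z_s, θ⟩) − c_s) z_s for a finite set S, vectors z_s ∈ ℝ^d, weights w_s ∈ ℝ, and constants c_s ∈ ℝ. Then for any θ₁, θ₂ ∈ ℝ^d, ‖θ₁ − θ₂‖₂ ≤ (1/λ)‖G(θ₁) − G(θ₂)‖₂. -/
open scoped RealInnerProductSpace

theorem stmt_1 {d : ℕ} {ι : Type*} (S : Finset ι)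
    (μ : ℝ → ℝ) (κ lam : ℝ) (hκ : 0 < κ) (hlam : 0 < lam)
    (hμ : Differentiable ℝ μ) (hderiv : ∀ x : ℝ, κ ≤ deriv μ x)
    (z : ι → EuclideanSpace ℝ (Fin d)) (w : ι → ℝ) (c : ι → ℝ)
    (G : EuclideanSpace ℝ (Fin d) → EuclideanSpace ℝ (Fin d))
    (hG : ∀ θ, G θ = lam • θ +
      ∑ s ∈ S, ((w s) ^ 2 * (μ ⟪z s, θ⟫ - c s)) • z s)
    (θ₁ θ₂ : EuclideanSpace ℝ (Fin d)) :
    ‖θ₁ - θ₂‖ ≤ (1 / lam) * ‖G θ₁ - G θ₂‖ := by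
  have hmono : Monotone μ := by
    apply monotone_of_deriv_nonneg hμ
    intro x
    exact le_trans hκ.le (hderiv x)
  set Δ := θ₁ - θ₂ with hΔ
  have key : lam * ‖Δ‖ ^ 2 ≤ ⟪G θ₁ - G θ₂, Δ⟫ := by
    rw [hG, hG]
    have : (lam • θ₁ + ∑ s ∈ S, ((w s) ^ 2 * (μ ⟪z s, θ₁⟫ - c s)) • z s)
        - (lam • θ₂ + ∑ s ∈ S, ((w s) ^ 2 * (μ ⟪z s, θ₂⟫ - c s)) • z s)
        = lam • Δ + ∑ s ∈ S, ((w s) ^ 2 * (μ ⟪z s, θ₁⟫ - μ ⟪z s, θ₂⟫)) • z s := by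
      have hterm : (∑ s ∈ S, ((w s) ^ 2 * (μ ⟪z s, θ₁⟫ - μ ⟪z s, θ₂⟫)) • z s)
          = (∑ s ∈ S, ((w s) ^ 2 * (μ ⟪z s, θ₁⟫ - c s)) • z s)
            - ∑ s ∈ S, ((w s) ^ 2 * (μ ⟪z s, θ₂⟫ - c s)) • z s := by
        rw [← Finset.sum_sub_distrib]
        refine Finset.sum_congr rfl fun s _ => ?_
        rw [← sub_smul]
        ring_nf
      rw [hterm, hΔ, smul_sub]
      abel
    rw [this, inner_add_left, inner_smul_left, real_inner_self_eq_norm_sq]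
    have hsum : 0 ≤ ⟪∑ s ∈ S, ((w s) ^ 2 * (μ ⟪z s, θ₁⟫ - μ ⟪z s, θ₂⟫)) • z s, Δ⟫ := by
      rw [sum_inner]
      apply Finset.sum_nonneg
      intro s _
      rw [inner_smul_left]
      have hzd : ⟪z s, Δ⟫ = ⟪z s, θ₁⟫ - ⟪z s, θ₂⟫ := by
        rw [hΔ, inner_sub_right]
      simp only [RCLike.star_def, starRingEnd_apply, star_trivial, hzd]
      rw [mul_assoc]
      apply mul_nonneg (sq_nonneg _)
      rcases le_total ⟪z s, θ₂⟫ ⟪z s, θ₁⟫ with h | h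
      · exact mul_nonneg (sub_nonneg.mpr (hmono h)) (sub_nonneg.mpr h)
      · nlinarith [sub_nonpos.mpr (hmono h), sub_nonpos.mpr h]
    simp only [RCLike.star_def, starRingEnd_apply, star_trivial]
    linarith
  have hCS : ⟪G θ₁ - G θ₂, Δ⟫ ≤ ‖G θ₁ - G θ₂‖ * ‖Δ‖ := real_inner_le_norm _ _
  rcases eq_or_ne Δ 0 with h0 | h0
  · rw [h0, norm_zero]
    positivity
  · have hnorm : 0 < ‖Δ‖ := norm_pos_iff.mpr h0
    rw [div_mul_eq_mul_div, le_div_iff₀ hlam, mul_comm]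
    nlinarith [key, hCS]
end

section
/- Let Σ be a positive definite d×d matrix, let F be a symmetric d×d matrix satisfying F ⪰ κΣ for some κ > 0, and let v ∈ ℝ^d. Then ⟨Fv, Σ⁻¹ (Fv)⟩ ≥ κ² ⟨v, Σ v⟩; i.e., ‖Fv‖²_{Σ⁻¹} ≥ κ² ‖v‖²_Σ. -/
/-! With `G = F - Σ ⪰ 0` we have `Fv = Gv + Σv`, and expanding the quadratic form gives
`‖Fv‖²_{Σ⁻¹} = ‖Gv‖²_{Σ⁻¹} + 2⟨v, Gv⟩ + ‖v‖²_Σ ≥ ‖v‖²_Σ`. The general case follows by applying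
this to `κΣ`, whose inverse is `κ⁻¹Σ⁻¹`. -/

open Matrix

variable {n : Type*} [Fintype n] [DecidableEq n]

theorem Matrix.add_mulVec_dotProduct_inv_mulVec {R : Type*} [CommRing R] {S : Matrix n n R}
    (hS : S.IsSymm) (hdet : IsUnit S.det) (w x : n → R) :
    (w + S *ᵥ x) ⬝ᵥ S⁻¹ *ᵥ (w + S *ᵥ x)
      = w ⬝ᵥ S⁻¹ *ᵥ w + 2 * (x ⬝ᵥ w) + x ⬝ᵥ S *ᵥ x := by
  have hinv : S⁻¹ *ᵥ (S *ᵥ x) = x := by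
    rw [mulVec_mulVec, nonsing_inv_mul S hdet, one_mulVec]
  have hcross : S *ᵥ x ⬝ᵥ S⁻¹ *ᵥ w = x ⬝ᵥ w := by
    have hSx : S *ᵥ x = x ᵥ* S := by rw [← vecMul_transpose, hS.eq]
    rw [hSx, ← dotProduct_mulVec, mulVec_mulVec, mul_nonsing_inv S hdet, one_mulVec]
  rw [mulVec_add, hinv, add_dotProduct, dotProduct_add, dotProduct_add, hcross,
    dotProduct_comm w x, dotProduct_comm (S *ᵥ x) x]
  ring

theorem Matrix.dotProduct_mulVec_le_inv_of_posSemidef_sub {S F : Matrix n n ℝ} (hS : S.PosDef)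
    (hFS : (F - S).PosSemidef) (v : n → ℝ) :
    v ⬝ᵥ S *ᵥ v ≤ F *ᵥ v ⬝ᵥ S⁻¹ *ᵥ (F *ᵥ v) := by
  have hdecomp : F *ᵥ v = (F - S) *ᵥ v + S *ᵥ v := by rw [sub_mulVec, sub_add_cancel]
  have hG : 0 ≤ v ⬝ᵥ (F - S) *ᵥ v := by simpa using hFS.dotProduct_mulVec_nonneg v
  have hGinv : 0 ≤ (F - S) *ᵥ v ⬝ᵥ S⁻¹ *ᵥ ((F - S) *ᵥ v) := by
    simpa using hS.inv.posSemidef.dotProduct_mulVec_nonneg ((F - S) *ᵥ v)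
  rw [hdecomp, add_mulVec_dotProduct_inv_mulVec (isHermitian_iff_isSymm.mp hS.isHermitian)
    ((isUnit_iff_isUnit_det S).mp hS.isUnit)]
  linarith

theorem stmt_4_general {d : ℕ} (Sig F : Matrix (Fin d) (Fin d) ℝ) (κ : ℝ) (hκ : 0 < κ)
    (hSig : Sig.PosDef) (hFSig : (F - κ • Sig).PosSemidef)
    (v : Fin d → ℝ) :
    κ ^ 2 * (v ⬝ᵥ Sig.mulVec v) ≤ (F.mulVec v) ⬝ᵥ (Sig⁻¹.mulVec (F.mulVec v)) := by
  have h := dotProduct_mulVec_le_inv_of_posSemidef_sub (hSig.smul hκ) hFSig v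
  have : Invertible κ := invertibleOfNonzero hκ.ne'
  rw [inv_smul Sig κ ((isUnit_iff_isUnit_det Sig).mp hSig.isUnit), invOf_eq_inv] at h
  simp only [smul_mulVec, dotProduct_smul, smul_eq_mul] at h
  calc κ ^ 2 * (v ⬝ᵥ Sig *ᵥ v) = κ * (κ * (v ⬝ᵥ Sig *ᵥ v)) := by ring
    _ ≤ κ * (κ⁻¹ * (F *ᵥ v ⬝ᵥ Sig⁻¹ *ᵥ (F *ᵥ v))) := by gcongr
    _ = F *ᵥ v ⬝ᵥ Sig⁻¹ *ᵥ (F *ᵥ v) := mul_inv_cancel_left₀ hκ.ne' _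

theorem stmt_4 {d : ℕ} (Sig F : Matrix (Fin d) (Fin d) ℝ) (κ : ℝ) (hκ : 0 < κ)
    (hSig : Sig.PosDef) (hF : F.IsSymm) (hFSig : (F - κ • Sig).PosSemidef)
    (v : Fin d → ℝ) :
    κ ^ 2 * (v ⬝ᵥ Sig.mulVec v) ≤ (F.mulVec v) ⬝ᵥ (Sig⁻¹.mulVec (F.mulVec v)) :=
  stmt_4_general Sig F κ hκ hSig hFSig v
end

section
/- Let {x_k}_{k=1}^K ⊆ ℝ^d with ‖x_k‖₂ ≤ L for all k, let λ > 0, and define Z_k = λI + ∑_{i=1}^{k−1} x_i x_iᵀ. Then ∑_{k=1}^K min{1, ‖x_k‖²_{Z_k⁻¹}} ≤ 2d log(1 + K L²/(dλ)). -/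
/-!
By the matrix determinant lemma, `det Z_{k+1} = det Z_k * (1 + ‖x_k‖²_{Z_k⁻¹})`, so the sum of
`log (1 + ‖x_k‖²_{Z_k⁻¹})` telescopes to `log det (λI + ∑_k x_k x_kᵀ) - d log λ`. Jensen's inequality
for `log` on the eigenvalues gives `log det Z ≤ d log (tr Z / d)`, and the trace of the last matrix
is at most `dλ + K L²`. Finally `min 1 u ≤ 2 log (1 + u)` for `u ≥ 0`.
-/

open Matrix Finset

lemma min_one_le_two_mul_log_one_add {u : ℝ} (hu : 0 ≤ u) : min 1 u ≤ 2 * Real.log (1 + u) := by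
  calc min 1 u ≤ 2 * (2 * u / (u + 2)) := by
        rw [mul_div_assoc', le_div_iff₀ (by linarith)]
        rcases le_total u 1 with h | h
        · rw [min_eq_right h]; nlinarith
        · rw [min_eq_left h]; linarith
    _ ≤ 2 * Real.log (1 + u) := by gcongr; exact Real.le_log_one_add_of_nonneg hu

theorem EuclideanSpace.dotProduct_self_ofLp {ι : Type*} [Fintype ι] (x : EuclideanSpace ℝ ι) :
    x.ofLp ⬝ᵥ x.ofLp = ‖x‖ ^ 2 := by
  rw [EuclideanSpace.real_norm_sq_eq]
  simp [dotProduct, sq]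

namespace Matrix

variable {n : Type*} [Fintype n] [DecidableEq n]

theorem det_add_vecMulVec {R : Type*} [CommRing R] {A : Matrix n n R} (hA : IsUnit A.det)
    (u v : n → R) : (A + vecMulVec u v).det = A.det * (1 + v ⬝ᵥ A⁻¹ *ᵥ u) := by
  rw [vecMulVec_eq Unit, det_add_replicateCol_mul_replicateRow hA, det_unique (n := Unit),
    Matrix.mul_assoc, ← replicateCol_mulVec, Matrix.add_apply, one_apply_eq,
    replicateRow_mul_replicateCol_apply]

theorem PosDef.log_det_add_vecMulVec_self {A : Matrix n n ℝ} (hA : A.PosDef) (v : n → ℝ) :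
    Real.log (A + vecMulVec v v).det = Real.log A.det + Real.log (1 + v ⬝ᵥ A⁻¹ *ᵥ v) := by
  have hq : 0 ≤ v ⬝ᵥ A⁻¹ *ᵥ v := by simpa using hA.posSemidef.inv.dotProduct_mulVec_nonneg v
  rw [det_add_vecMulVec hA.det_pos.ne'.isUnit, Real.log_mul hA.det_pos.ne' (by positivity)]

theorem PosDef.log_det_le [Nonempty n] {A : Matrix n n ℝ} (hA : A.PosDef) :
    Real.log A.det ≤ Fintype.card n * Real.log (A.trace / Fintype.card n) := by
  have hcard : (0 : ℝ) < Fintype.card n := by exact_mod_cast Fintype.card_pos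
  have jensen := strictConcaveOn_log_Ioi.concaveOn.le_map_sum (t := univ)
    (w := fun _ => (Fintype.card n : ℝ)⁻¹) (p := hA.1.eigenvalues) (fun _ _ => by positivity)
    (by simp [hcard.ne']) (fun i _ => hA.eigenvalues_pos i)
  simp only [smul_eq_mul, ← mul_sum] at jensen
  rw [hA.1.det_eq_prod_eigenvalues, hA.1.trace_eq_sum_eigenvalues]
  simp only [RCLike.ofReal_real_eq_id, id]
  rw [Real.log_prod fun i _ => (hA.eigenvalues_pos i).ne', div_eq_inv_mul]
  rwa [inv_mul_le_iff₀ hcard] at jensen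

end Matrix

section PrefixGram

variable {n : Type*} {K : ℕ}

def prefixGram {R : Type*} [Semiring R] (A : Matrix n n R) (v : Fin K → n → R) (m : ℕ) :
    Matrix n n R :=
  A + ∑ i ∈ univ.filter (fun i : Fin K => (i : ℕ) < m), vecMulVec (v i) (v i)

variable {R : Type*} [Semiring R] (A : Matrix n n R) (v : Fin K → n → R)

@[simp]
theorem prefixGram_zero : prefixGram A v 0 = A := by
  simp [prefixGram]

theorem prefixGram_succ (k : Fin K) :
    prefixGram A v (k + 1) = prefixGram A v k + vecMulVec (v k) (v k) := by
  have hsplit : univ.filter (fun i : Fin K => (i : ℕ) < k + 1) =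
      insert k (univ.filter (fun i : Fin K => (i : ℕ) < k)) := by
    ext i
    simp [le_iff_eq_or_lt, Fin.val_inj]
  rw [prefixGram, prefixGram, hsplit, sum_insert (by simp), add_comm (vecMulVec _ _), add_assoc]

theorem trace_prefixGram [Fintype n] (m : ℕ) :
    (prefixGram A v m).trace =
      A.trace + ∑ i ∈ univ.filter (fun i : Fin K => (i : ℕ) < m), v i ⬝ᵥ v i := by
  simp [prefixGram, trace_add, trace_vecMulVec]

end PrefixGram

section LogDet

variable {n : Type*} [Fintype n] {K : ℕ} {A : Matrix n n ℝ}

theorem Matrix.PosDef.prefixGram (hA : A.PosDef) (v : Fin K → n → ℝ) (m : ℕ) :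
    (prefixGram A v m).PosDef :=
  hA.add_posSemidef <| posSemidef_sum _ fun i _ => by
    simpa using posSemidef_vecMulVec_self_star (v i)

theorem sum_log_one_add_dotProduct_inv_prefixGram [DecidableEq n] (hA : A.PosDef)
    (v : Fin K → n → ℝ) :
    ∑ k : Fin K, Real.log (1 + v k ⬝ᵥ (prefixGram A v k)⁻¹ *ᵥ v k) =
      Real.log (prefixGram A v K).det - Real.log A.det := by
  set f : ℕ → ℝ := fun m => Real.log (prefixGram A v m).det
  have hstep (k : Fin K) :
      Real.log (1 + v k ⬝ᵥ (prefixGram A v k)⁻¹ *ᵥ v k) = f (k + 1) - f k := by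
    simp only [f, prefixGram_succ, (hA.prefixGram v k).log_det_add_vecMulVec_self]
    ring
  simp only [hstep]
  rw [Fin.sum_univ_eq_sum_range (fun m => f (m + 1) - f m), sum_range_sub]
  simp [f]

theorem log_det_prefixGram_le [DecidableEq n] [Nonempty n] (hA : A.PosDef)
    {v : Fin K → n → ℝ} {c : ℝ} (hv : ∀ i, v i ⬝ᵥ v i ≤ c) :
    Real.log (prefixGram A v K).det ≤
      Fintype.card n * Real.log ((A.trace + K * c) / Fintype.card n) := by
  refine (hA.prefixGram v K).log_det_le.trans ?_
  have := (hA.prefixGram v K).trace_pos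
  gcongr
  rw [trace_prefixGram]
  simpa using sum_le_sum fun i (_ : i ∈ univ) => hv i

end LogDet

theorem stmt_10_general {d K : ℕ} (hd : 0 < d) (L lam : ℝ) (hlam : 0 < lam)
    (x : Fin K → EuclideanSpace ℝ (Fin d)) (hx : ∀ k, ‖x k‖ ≤ L)
    (Z : Fin K → Matrix (Fin d) (Fin d) ℝ)
    (hZ : ∀ k, Z k = lam • (1 : Matrix (Fin d) (Fin d) ℝ) +
      ∑ i ∈ univ.filter (fun i => i < k), vecMulVec (x i) (x i)) :
    ∑ k, min 1 ((x k) ⬝ᵥ (Z k)⁻¹.mulVec (x k)) ≤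
      2 * d * Real.log (1 + K * L ^ 2 / (d * lam)) := by
  have : Nonempty (Fin d) := Fin.pos_iff_nonempty.mp hd
  set v : Fin K → Fin d → ℝ := fun k => (x k).ofLp
  set A : Matrix (Fin d) (Fin d) ℝ := lam • 1
  have hA : A.PosDef := PosDef.one.smul hlam
  have hZ_prefix (k : Fin K) : Z k = prefixGram A v k := hZ k
  have hlogA : Real.log A.det = d * Real.log lam := by
    rw [det_smul, det_one, mul_one, Fintype.card_fin, Real.log_pow]
  have hlogZ := log_det_prefixGram_le hA fun i => (x i).dotProduct_self_ofLp.trans_le <|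
    pow_le_pow_left₀ (norm_nonneg _) (hx i) 2
  simp only [Fintype.card_fin, A, trace_smul, trace_one, smul_eq_mul] at hlogZ
  calc ∑ k, min 1 (v k ⬝ᵥ (Z k)⁻¹ *ᵥ v k)
      ≤ ∑ k : Fin K, 2 * Real.log (1 + v k ⬝ᵥ (prefixGram A v k)⁻¹ *ᵥ v k) := by
        refine sum_le_sum fun k _ => ?_
        rw [hZ_prefix k]
        exact min_one_le_two_mul_log_one_add <| by
          simpa using (hA.prefixGram v k).posSemidef.inv.dotProduct_mulVec_nonneg (v k)
    _ = 2 * (Real.log (prefixGram A v K).det - Real.log A.det) := by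
        rw [← mul_sum, sum_log_one_add_dotProduct_inv_prefixGram hA]
    _ ≤ 2 * (d * Real.log ((lam * d + K * L ^ 2) / d) - d * Real.log lam) := by
        rw [hlogA]; linarith
    _ = 2 * d * Real.log (1 + K * L ^ 2 / (d * lam)) := by
        rw [← mul_sub, ← Real.log_div (by positivity) hlam.ne']
        field_simp

theorem stmt_10 {d K : ℕ} (hd : 0 < d) (L lam : ℝ) (hlam : 0 < lam) (hL : 0 < L)
    (x : Fin K → EuclideanSpace ℝ (Fin d)) (hx : ∀ k, ‖x k‖ ≤ L)
    (Z : Fin K → Matrix (Fin d) (Fin d) ℝ)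
    (hZ : ∀ k, Z k = lam • (1 : Matrix (Fin d) (Fin d) ℝ) +
      ∑ i ∈ univ.filter (fun i => i < k), vecMulVec (x i) (x i)) :
    ∑ k, min 1 ((x k) ⬝ᵥ (Z k)⁻¹.mulVec (x k)) ≤
      2 * d * Real.log (1 + K * L ^ 2 / (d * lam)) :=
  stmt_10_general hd L lam hlam x hx Z hZ
end

section
/- Suppose for each arm feature x in a finite set A and a reference optimal arm x*, and for estimators θ̂ satisfying ‖θ̂ − θ*‖_Σ ≤ β, the selected pair (x_t, y_t) maximizes (x+y)ᵀθ̂ + β‖x−y‖_{Σ⁻¹} over pairs in A. Then the instantaneous regret satisfies 2⟨x*, θ*⟩ − ⟨x_t + y_t, θ*⟩ ≤ 2β‖x_t − y_t‖_{Σ⁻¹}. -/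
/-! Cauchy–Schwarz in the dual pair of norms `‖·‖_Σ`, `‖·‖_{Σ⁻¹}` turns the confidence bound
`‖θ̂ - θ*‖_Σ ≤ β` into the optimistic estimate `⟨v, θ*⟩ ≤ ⟨v, θ̂⟩ + β ‖v‖_{Σ⁻¹}`. Applying it to
`v = x* - x_t` and `v = x* - y_t`, and comparing the selected pair with the pairs `(x*, x_t)` and
`(x*, y_t)`, the `θ̂`-terms cancel after adding the two inequalities. -/

open Matrix

theorem Matrix.PosSemidef.dotProduct_mulVec_sq_le {n : Type*} [Fintype n] {S : Matrix n n ℝ}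
    (hS : S.PosSemidef) (u v : n → ℝ) :
    (u ⬝ᵥ S *ᵥ v) ^ 2 ≤ (u ⬝ᵥ S *ᵥ u) * (v ⬝ᵥ S *ᵥ v) := by
  -- Cauchy–Schwarz for the inner product `⟪u, v⟫ = (S *ᵥ v) ⬝ᵥ u` that `S` induces
  let := S.toSeminormedAddCommGroup hS
  let := S.toInnerProductSpace hS
  rw [sq, dotProduct_comm u, dotProduct_comm u, dotProduct_comm v]
  exact real_inner_mul_inner_self_le u v

theorem Matrix.PosDef.dotProduct_le_sqrt_inv_mul_sqrt {n : Type*} [Fintype n] [DecidableEq n]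
    {S : Matrix n n ℝ} (hS : S.PosDef) (u v : n → ℝ) :
    u ⬝ᵥ v ≤ √(u ⬝ᵥ S⁻¹ *ᵥ u) * √(v ⬝ᵥ S *ᵥ v) := by
  have hv : S⁻¹ *ᵥ (S *ᵥ v) = v := by
    rw [mulVec_mulVec, nonsing_inv_mul _ hS.det_pos.ne'.isUnit, one_mulVec]
  have hcs := hS.inv.posSemidef.dotProduct_mulVec_sq_le u (S *ᵥ v)
  rw [hv, dotProduct_comm (S *ᵥ v)] at hcs
  rw [← Real.sqrt_mul (by simpa using hS.inv.posSemidef.dotProduct_mulVec_nonneg u)]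
  exact Real.le_sqrt_of_sq_le hcs

theorem Matrix.PosDef.dotProduct_le_add_of_sqrt_le {n : Type*} [Fintype n] [DecidableEq n]
    {S : Matrix n n ℝ} (hS : S.PosDef) {β : ℝ} {θhat θstar : n → ℝ}
    (hconc : √((θhat - θstar) ⬝ᵥ S *ᵥ (θhat - θstar)) ≤ β) (v : n → ℝ) :
    v ⬝ᵥ θstar ≤ v ⬝ᵥ θhat + β * √(v ⬝ᵥ S⁻¹ *ᵥ v) := by
  have hcs := hS.dotProduct_le_sqrt_inv_mul_sqrt (-v) (θhat - θstar)
  simp only [mulVec_neg, dotProduct_neg, neg_dotProduct, neg_neg, dotProduct_sub] at hcs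
  have := mul_le_mul_of_nonneg_left hconc (Real.sqrt_nonneg (v ⬝ᵥ S⁻¹ *ᵥ v))
  linarith

theorem stmt_12_general {d : ℕ} (A : Finset (Fin d → ℝ))
    (Sig : Matrix (Fin d) (Fin d) ℝ) (hSig : Sig.PosDef)
    (β : ℝ) (θhat θstar xstar xt yt : Fin d → ℝ)
    (hxstar : xstar ∈ A)
    (hconc : Real.sqrt ((θhat - θstar) ⬝ᵥ Sig.mulVec (θhat - θstar)) ≤ β)
    (hxt : xt ∈ A) (hyt : yt ∈ A)
    (hmax : ∀ x ∈ A, ∀ y ∈ A,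
      (x + y) ⬝ᵥ θhat + β * Real.sqrt ((x - y) ⬝ᵥ Sig⁻¹.mulVec (x - y)) ≤
      (xt + yt) ⬝ᵥ θhat + β * Real.sqrt ((xt - yt) ⬝ᵥ Sig⁻¹.mulVec (xt - yt))) :
    2 * (xstar ⬝ᵥ θstar) - (xt + yt) ⬝ᵥ θstar ≤
      2 * β * Real.sqrt ((xt - yt) ⬝ᵥ Sig⁻¹.mulVec (xt - yt)) := by
  have ucb_xt := hSig.dotProduct_le_add_of_sqrt_le hconc (xstar - xt)
  have ucb_yt := hSig.dotProduct_le_add_of_sqrt_le hconc (xstar - yt)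
  have max_xt := hmax xstar hxstar xt hxt
  have max_yt := hmax xstar hxstar yt hyt
  simp only [sub_dotProduct, add_dotProduct] at ucb_xt ucb_yt max_xt max_yt ⊢
  linarith

theorem stmt_12 {d : ℕ} (A : Finset (Fin d → ℝ))
    (Sig : Matrix (Fin d) (Fin d) ℝ) (hSig : Sig.PosDef)
    (β : ℝ) (hβ : 0 < β) (θhat θstar xstar xt yt : Fin d → ℝ)
    (hxstar : xstar ∈ A) (hopt : ∀ x ∈ A, x ⬝ᵥ θstar ≤ xstar ⬝ᵥ θstar)
    (hconc : Real.sqrt ((θhat - θstar) ⬝ᵥ Sig.mulVec (θhat - θstar)) ≤ β)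
    (hxt : xt ∈ A) (hyt : yt ∈ A)
    (hmax : ∀ x ∈ A, ∀ y ∈ A,
      (x + y) ⬝ᵥ θhat + β * Real.sqrt ((x - y) ⬝ᵥ Sig⁻¹.mulVec (x - y)) ≤
      (xt + yt) ⬝ᵥ θhat + β * Real.sqrt ((xt - yt) ⬝ᵥ Sig⁻¹.mulVec (xt - yt))) :
    2 * (xstar ⬝ᵥ θstar) - (xt + yt) ⬝ᵥ θstar ≤
      2 * β * Real.sqrt ((xt - yt) ⬝ᵥ Sig⁻¹.mulVec (xt - yt)) :=
  stmt_12_general A Sig hSig β θhat θstar xstar xt yt hxstar hconc hxt hyt hmax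
end

section
/- Let A ⊆ ℝ^d be a finite set, θ̂, θ* ∈ ℝ^d, Σ positive definite, β > 0 with ‖θ̂ − θ*‖_Σ ≤ β. Let x* = argmax_{x∈A} ⟨x, θ*⟩, x_t = argmax_{x∈A} ⟨x, θ̂⟩, and y_t = argmax_{y∈A} (⟨y, θ̂⟩ + 2β‖x_t − y‖_{Σ⁻¹}). Then 2⟨x*, θ*⟩ − ⟨x_t + y_t, θ*⟩ ≤ 3β‖x_t − y_t‖_{Σ⁻¹}. -/
/-!
Write `‖v‖_M = √(vᵀ M v)` and `g = θ̂ - θ*`. The `Σ`- and `Σ⁻¹`-norms are dual, so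
`⟨v, g⟩ ≤ ‖v‖_{Σ⁻¹} ‖g‖_Σ ≤ β ‖v‖_{Σ⁻¹}`, whence `⟨x - y, θ*⟩ ≤ ⟨x - y, θ̂⟩ + β ‖x - y‖_{Σ⁻¹}`
for all arms `x, y`. Apply this to `(x*, xₜ)` and `(x*, yₜ)`; the first `θ̂`-gap is `≤ 0` since
`xₜ` is greedy, and comparing `yₜ` with the candidate `x*` in its optimistic rule gives
`⟨x* - yₜ, θ̂⟩ ≤ 2β (‖xₜ - yₜ‖ - ‖xₜ - x*‖)`. The triangle inequality
`‖yₜ - x*‖ ≤ ‖xₜ - yₜ‖ + ‖xₜ - x*‖` then makes all `‖xₜ - x*‖` terms cancel.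
-/

open Matrix

namespace Matrix

variable {n : Type*} [Fintype n]

lemma dotProduct_mulVec_sub_comm (M : Matrix n n ℝ) (x y : n → ℝ) :
    (x - y) ⬝ᵥ M *ᵥ (x - y) = (y - x) ⬝ᵥ M *ᵥ (y - x) := by
  rw [← neg_sub y x, neg_dotProduct, mulVec_neg, dotProduct_neg, neg_neg]

namespace PosSemidef

variable {M : Matrix n n ℝ}

lemma sqrt_dotProduct_mulVec_eq_norm (hM : M.PosSemidef) (x : n → ℝ) :
    √(x ⬝ᵥ M *ᵥ x) = @norm _ (M.toSeminormedAddCommGroup hM).toNorm x := by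
  let := M.toSeminormedAddCommGroup hM
  let := M.toInnerProductSpace hM
  rw [norm_eq_sqrt_re_inner (𝕜 := ℝ)]
  congr 1
  show _ = (M *ᵥ x) ⬝ᵥ star x
  simp [dotProduct_comm]

lemma dotProduct_mulVec_le_sqrt_mul_sqrt (hM : M.PosSemidef) (u v : n → ℝ) :
    u ⬝ᵥ M *ᵥ v ≤ √(u ⬝ᵥ M *ᵥ u) * √(v ⬝ᵥ M *ᵥ v) := by
  let := M.toSeminormedAddCommGroup hM
  let := M.toInnerProductSpace hM
  rw [hM.sqrt_dotProduct_mulVec_eq_norm, hM.sqrt_dotProduct_mulVec_eq_norm]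
  convert real_inner_le_norm u v using 1
  show _ = (M *ᵥ v) ⬝ᵥ star u
  simp [dotProduct_comm]

lemma sqrt_dotProduct_mulVec_sub_le (hM : M.PosSemidef) (x y z : n → ℝ) :
    √((x - z) ⬝ᵥ M *ᵥ (x - z)) ≤ √((x - y) ⬝ᵥ M *ᵥ (x - y)) + √((y - z) ⬝ᵥ M *ᵥ (y - z)) := by
  simp only [hM.sqrt_dotProduct_mulVec_eq_norm]
  exact @norm_sub_le_norm_sub_add_norm_sub _
    (M.toSeminormedAddCommGroup hM).toSeminormedAddGroup x y z

end PosSemidef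

lemma PosDef.dotProduct_le_sqrt_inv_mul_sqrt_s13 [DecidableEq n] {M : Matrix n n ℝ} (hM : M.PosDef)
    (v g : n → ℝ) : v ⬝ᵥ g ≤ √(v ⬝ᵥ M⁻¹ *ᵥ v) * √(g ⬝ᵥ M *ᵥ g) := by
  have hg : M⁻¹ *ᵥ (M *ᵥ g) = g := by
    rw [mulVec_mulVec, nonsing_inv_mul _ hM.det_pos.ne'.isUnit, one_mulVec]
  calc v ⬝ᵥ g = v ⬝ᵥ M⁻¹ *ᵥ (M *ᵥ g) := by rw [hg]
    _ ≤ √(v ⬝ᵥ M⁻¹ *ᵥ v) * √((M *ᵥ g) ⬝ᵥ M⁻¹ *ᵥ (M *ᵥ g)) :=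
      hM.posSemidef.inv.dotProduct_mulVec_le_sqrt_mul_sqrt v _
    _ = √(v ⬝ᵥ M⁻¹ *ᵥ v) * √(g ⬝ᵥ M *ᵥ g) := by rw [hg, dotProduct_comm (M *ᵥ g)]

end Matrix

lemma sub_dotProduct_le_add_mul_sqrt_inv {n : Type*} [Fintype n] [DecidableEq n] {Sig : Matrix n n ℝ}
    (hSig : Sig.PosDef) {β : ℝ} {θhat θstar : n → ℝ}
    (hconc : √((θhat - θstar) ⬝ᵥ Sig *ᵥ (θhat - θstar)) ≤ β) (x y : n → ℝ) :
    (x - y) ⬝ᵥ θstar ≤ (x - y) ⬝ᵥ θhat + β * √((y - x) ⬝ᵥ Sig⁻¹ *ᵥ (y - x)) := by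
  have hdual := hSig.dotProduct_le_sqrt_inv_mul_sqrt_s13 (y - x) (θhat - θstar)
  have hβ := mul_le_mul_of_nonneg_left hconc (Real.sqrt_nonneg ((y - x) ⬝ᵥ Sig⁻¹ *ᵥ (y - x)))
  have hsplit : (x - y) ⬝ᵥ θstar = (x - y) ⬝ᵥ θhat + (y - x) ⬝ᵥ (θhat - θstar) := by
    simp only [sub_dotProduct, dotProduct_sub]; ring
  linarith

theorem stmt_13_general {d : ℕ} (A : Finset (Fin d → ℝ))
    (Sig : Matrix (Fin d) (Fin d) ℝ) (hSig : Sig.PosDef)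
    (β : ℝ) (θhat θstar xstar xt yt : Fin d → ℝ)
    (hconc : Real.sqrt ((θhat - θstar) ⬝ᵥ Sig.mulVec (θhat - θstar)) ≤ β)
    (hxstar : xstar ∈ A)
    (hxtmax : ∀ x ∈ A, x ⬝ᵥ θhat ≤ xt ⬝ᵥ θhat)
    (hytmax : ∀ y ∈ A,
      y ⬝ᵥ θhat + 2 * β * Real.sqrt ((xt - y) ⬝ᵥ Sig⁻¹.mulVec (xt - y)) ≤
      yt ⬝ᵥ θhat + 2 * β * Real.sqrt ((xt - yt) ⬝ᵥ Sig⁻¹.mulVec (xt - yt))) :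
    2 * (xstar ⬝ᵥ θstar) - (xt + yt) ⬝ᵥ θstar ≤
      3 * β * Real.sqrt ((xt - yt) ⬝ᵥ Sig⁻¹.mulVec (xt - yt)) := by
  have hβ : 0 ≤ β := (Real.sqrt_nonneg _).trans hconc
  have hgap_xt := sub_dotProduct_le_add_mul_sqrt_inv hSig hconc xstar xt
  have hgap_yt := sub_dotProduct_le_add_mul_sqrt_inv hSig hconc xstar yt
  have htri : √((yt - xstar) ⬝ᵥ Sig⁻¹ *ᵥ (yt - xstar)) ≤
      √((xt - yt) ⬝ᵥ Sig⁻¹ *ᵥ (xt - yt)) + √((xt - xstar) ⬝ᵥ Sig⁻¹ *ᵥ (xt - xstar)) := by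
    rw [dotProduct_mulVec_sub_comm Sig⁻¹ xt yt]
    exact hSig.posSemidef.inv.sqrt_dotProduct_mulVec_sub_le yt xt xstar
  have hgreedy := hxtmax xstar hxstar
  have hoptimistic := hytmax xstar hxstar
  have hregret : 2 * (xstar ⬝ᵥ θstar) - (xt + yt) ⬝ᵥ θstar =
      (xstar - xt) ⬝ᵥ θstar + (xstar - yt) ⬝ᵥ θstar := by
    simp only [sub_dotProduct, add_dotProduct]; ring
  rw [hregret]
  linarith [mul_le_mul_of_nonneg_left htri hβ, sub_dotProduct xstar xt θhat,
    sub_dotProduct xstar yt θhat]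

theorem stmt_13 {d : ℕ} (A : Finset (Fin d → ℝ))
    (Sig : Matrix (Fin d) (Fin d) ℝ) (hSig : Sig.PosDef)
    (β : ℝ) (hβ : 0 < β) (θhat θstar xstar xt yt : Fin d → ℝ)
    (hconc : Real.sqrt ((θhat - θstar) ⬝ᵥ Sig.mulVec (θhat - θstar)) ≤ β)
    (hxstar : xstar ∈ A) (hopt : ∀ x ∈ A, x ⬝ᵥ θstar ≤ xstar ⬝ᵥ θstar)
    (hxt : xt ∈ A) (hxtmax : ∀ x ∈ A, x ⬝ᵥ θhat ≤ xt ⬝ᵥ θhat)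
    (hyt : yt ∈ A)
    (hytmax : ∀ y ∈ A,
      y ⬝ᵥ θhat + 2 * β * Real.sqrt ((xt - y) ⬝ᵥ Sig⁻¹.mulVec (xt - y)) ≤
      yt ⬝ᵥ θhat + 2 * β * Real.sqrt ((xt - yt) ⬝ᵥ Sig⁻¹.mulVec (xt - yt))) :
    2 * (xstar ⬝ᵥ θstar) - (xt + yt) ⬝ᵥ θstar ≤
      3 * β * Real.sqrt ((xt - yt) ⬝ᵥ Sig⁻¹.mulVec (xt - yt)) :=
  stmt_13_general A Sig hSig β θhat θstar xstar xt yt hconc hxstar hxtmax hytmax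
end

section
/- Let A ⊆ ℝ^d be finite, θ̂, θ* ∈ ℝ^d, Σ positive definite, β > 0 with ‖θ̂ − θ*‖_Σ ≤ β. Let C = {x ∈ A : ∀y ∈ A, ⟨x − y, θ̂⟩ + β‖x − y‖_{Σ⁻¹} ≥ 0}. Then x* = argmax_{x∈A} ⟨x, θ*⟩ belongs to C. -/
/-!
For `y ∈ A` split `⟨x* - y, θ̂⟩ = ⟨x* - y, θ*⟩ + ⟨x* - y, θ̂ - θ*⟩`. The first term is nonnegative
by optimality of `x*`; the second is at least `-‖x* - y‖_{Σ⁻¹} ‖θ̂ - θ*‖_Σ ≥ -β ‖x* - y‖_{Σ⁻¹}`,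
since `‖·‖_{Σ⁻¹}` and `‖·‖_Σ` are dual norms (Cauchy–Schwarz for the inner product of `Σ⁻¹`,
applied to `v` and `Σ u`).
-/

open Matrix

namespace Matrix

variable {n : Type*} [Fintype n]

theorem PosSemidef.abs_dotProduct_mulVec_le {S : Matrix n n ℝ} (hS : S.PosSemidef)
    (a b : n → ℝ) :
    |a ⬝ᵥ S *ᵥ b| ≤ Real.sqrt (a ⬝ᵥ S *ᵥ a) * Real.sqrt (b ⬝ᵥ S *ᵥ b) := by
  let := S.toSeminormedAddCommGroup hS
  let := S.toInnerProductSpace hS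
  have hinner (x y : n → ℝ) : inner ℝ x y = x ⬝ᵥ S *ᵥ y := by
    change (S *ᵥ y) ⬝ᵥ star x = _
    rw [star_trivial, dotProduct_comm]
  have hcs := real_inner_mul_inner_self_le a b
  rw [hinner, hinner, hinner] at hcs
  rw [← Real.sqrt_mul (by simpa using hS.dotProduct_mulVec_nonneg a)]
  exact Real.abs_le_sqrt (by rwa [sq])

theorem PosDef.abs_dotProduct_le [DecidableEq n] {S : Matrix n n ℝ} (hS : S.PosDef)
    (v u : n → ℝ) :
    |v ⬝ᵥ u| ≤ Real.sqrt (v ⬝ᵥ S⁻¹ *ᵥ v) * Real.sqrt (u ⬝ᵥ S *ᵥ u) := by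
  have hSS : S⁻¹ *ᵥ (S *ᵥ u) = u := by
    rw [mulVec_mulVec, nonsing_inv_mul _ hS.det_pos.ne'.isUnit, one_mulVec]
  have h := hS.inv.posSemidef.abs_dotProduct_mulVec_le v (S *ᵥ u)
  rwa [hSS, dotProduct_comm (S *ᵥ u)] at h

end Matrix

theorem stmt_14_general {d : ℕ} (A : Finset (Fin d → ℝ))
    (Sig : Matrix (Fin d) (Fin d) ℝ) (hSig : Sig.PosDef)
    (β : ℝ) (θhat θstar xstar : Fin d → ℝ)
    (hconc : Real.sqrt ((θhat - θstar) ⬝ᵥ Sig.mulVec (θhat - θstar)) ≤ β)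
    (hxstar : xstar ∈ A) (hopt : ∀ x ∈ A, x ⬝ᵥ θstar ≤ xstar ⬝ᵥ θstar) :
    xstar ∈ {x ∈ A | ∀ y ∈ A,
      0 ≤ (x - y) ⬝ᵥ θhat + β * Real.sqrt ((x - y) ⬝ᵥ Sig⁻¹.mulVec (x - y))} := by
  refine Finset.mem_filter.2 ⟨hxstar, fun y hy => ?_⟩
  have hgap : 0 ≤ (xstar - y) ⬝ᵥ θstar := by
    rw [sub_dotProduct]
    linarith [hopt y hy]
  have hcs := hSig.abs_dotProduct_le (xstar - y) (θhat - θstar)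
  have hcs_β := mul_le_mul_of_nonneg_left hconc
    (Real.sqrt_nonneg ((xstar - y) ⬝ᵥ Sig⁻¹ *ᵥ (xstar - y)))
  rw [dotProduct_sub] at hcs
  linarith [neg_abs_le ((xstar - y) ⬝ᵥ θhat - (xstar - y) ⬝ᵥ θstar)]

theorem stmt_14 {d : ℕ} (A : Finset (Fin d → ℝ))
    (Sig : Matrix (Fin d) (Fin d) ℝ) (hSig : Sig.PosDef)
    (β : ℝ) (hβ : 0 < β) (θhat θstar xstar : Fin d → ℝ)
    (hconc : Real.sqrt ((θhat - θstar) ⬝ᵥ Sig.mulVec (θhat - θstar)) ≤ β)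
    (hxstar : xstar ∈ A) (hopt : ∀ x ∈ A, x ⬝ᵥ θstar ≤ xstar ⬝ᵥ θstar) :
    xstar ∈ {x ∈ A | ∀ y ∈ A,
      0 ≤ (x - y) ⬝ᵥ θhat + β * Real.sqrt ((x - y) ⬝ᵥ Sig⁻¹.mulVec (x - y))} :=
  stmt_14_general A Sig hSig β θhat θstar xstar hconc hxstar hopt
end

section
/- Let x*, x, y ∈ ℝ^d, θ̂, θ* ∈ ℝ^d, Σ positive definite, and β > 0 with ‖θ̂ − θ*‖_Σ ≤ β. If ‖x* − x‖_{Σ⁻¹} ≤ r, ‖x* − y‖_{Σ⁻¹} ≤ r, ⟨x, θ̂⟩ ≥ ⟨x*, θ̂⟩ − rβ, and ⟨y, θ̂⟩ ≥ ⟨x*, θ̂⟩ − rβ, then 2⟨x*, θ*⟩ − ⟨x + y, θ*⟩ ≤ 4rβ. -/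
/-!
Write `Δ = θ̂ - θ*`. For each of the two arms `z ∈ {x, y}` the gap `⟨x* - z, θ*⟩` splits as
`⟨x* - z, θ̂⟩ - ⟨x* - z, Δ⟩`. The first term is at most `rβ` by near-optimality of `z` under `θ̂`,
and the second is at most `‖x* - z‖_{Σ⁻¹} ‖Δ‖_Σ ≤ rβ` in absolute value by Cauchy–Schwarz for the
dual pair of norms `‖·‖_{Σ⁻¹}`, `‖·‖_Σ`. Adding the two gaps gives `4rβ`.
-/

open Matrix

namespace Matrix

variable {n : Type*} [Fintype n]

theorem PosSemidef.abs_dotProduct_mulVec_le_s16 {M : Matrix n n ℝ} (hM : M.PosSemidef) (x y : n → ℝ) :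
    |x ⬝ᵥ M *ᵥ y| ≤ √(x ⬝ᵥ M *ᵥ x) * √(y ⬝ᵥ M *ᵥ y) := by
  let := M.toSeminormedAddCommGroup hM
  let := M.toInnerProductSpace hM
  have inner_eq (u v : n → ℝ) : inner ℝ u v = u ⬝ᵥ M *ᵥ v := dotProduct_comm _ _
  simpa only [norm_eq_sqrt_real_inner, inner_eq] using abs_real_inner_le_norm x y

theorem PosDef.abs_dotProduct_le_s16 [DecidableEq n] {M : Matrix n n ℝ} (hM : M.PosDef) (x y : n → ℝ) :
    |x ⬝ᵥ y| ≤ √(x ⬝ᵥ M⁻¹ *ᵥ x) * √(y ⬝ᵥ M *ᵥ y) := by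
  have hMy : M⁻¹ *ᵥ M *ᵥ y = y := by
    rw [mulVec_mulVec, nonsing_inv_mul _ ((isUnit_iff_isUnit_det M).1 hM.isUnit), one_mulVec]
  have hcomm : M *ᵥ y ⬝ᵥ y = y ⬝ᵥ M *ᵥ y := dotProduct_comm _ _
  simpa only [hMy, hcomm] using hM.inv.posSemidef.abs_dotProduct_mulVec_le_s16 x (M *ᵥ y)

end Matrix

theorem dotProduct_sub_dotProduct_le_two_mul {n : Type*} [Fintype n] [DecidableEq n]
    {M : Matrix n n ℝ} (hM : M.PosDef) {β r : ℝ} {θhat θstar xstar z : n → ℝ}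
    (hθ : √((θhat - θstar) ⬝ᵥ M *ᵥ (θhat - θstar)) ≤ β)
    (hz : √((xstar - z) ⬝ᵥ M⁻¹ *ᵥ (xstar - z)) ≤ r)
    (hz_near : xstar ⬝ᵥ θhat - r * β ≤ z ⬝ᵥ θhat) :
    xstar ⬝ᵥ θstar - z ⬝ᵥ θstar ≤ 2 * (r * β) := by
  have hr : 0 ≤ r := (Real.sqrt_nonneg _).trans hz
  have hcs : |(xstar - z) ⬝ᵥ (θhat - θstar)| ≤ r * β :=
    (hM.abs_dotProduct_le_s16 _ _).trans (mul_le_mul hz hθ (Real.sqrt_nonneg _) hr)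
  have hlow := neg_le_of_abs_le hcs
  simp only [sub_dotProduct, dotProduct_sub] at hlow
  linarith

theorem stmt_16_general {d : ℕ} (Sig : Matrix (Fin d) (Fin d) ℝ) (hSig : Sig.PosDef)
    (β r : ℝ) (θhat θstar xstar x y : Fin d → ℝ)
    (hconc : Real.sqrt ((θhat - θstar) ⬝ᵥ Sig.mulVec (θhat - θstar)) ≤ β)
    (hx : Real.sqrt ((xstar - x) ⬝ᵥ Sig⁻¹.mulVec (xstar - x)) ≤ r)
    (hy : Real.sqrt ((xstar - y) ⬝ᵥ Sig⁻¹.mulVec (xstar - y)) ≤ r)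
    (hx2 : xstar ⬝ᵥ θhat - r * β ≤ x ⬝ᵥ θhat)
    (hy2 : xstar ⬝ᵥ θhat - r * β ≤ y ⬝ᵥ θhat) :
    2 * (xstar ⬝ᵥ θstar) - (x + y) ⬝ᵥ θstar ≤ 4 * r * β := by
  have gap_x := dotProduct_sub_dotProduct_le_two_mul hSig hconc hx hx2
  have gap_y := dotProduct_sub_dotProduct_le_two_mul hSig hconc hy hy2
  rw [add_dotProduct]
  linarith

theorem stmt_16 {d : ℕ} (Sig : Matrix (Fin d) (Fin d) ℝ) (hSig : Sig.PosDef)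
    (β r : ℝ) (hβ : 0 < β) (hr : 0 < r) (θhat θstar xstar x y : Fin d → ℝ)
    (hconc : Real.sqrt ((θhat - θstar) ⬝ᵥ Sig.mulVec (θhat - θstar)) ≤ β)
    (hx : Real.sqrt ((xstar - x) ⬝ᵥ Sig⁻¹.mulVec (xstar - x)) ≤ r)
    (hy : Real.sqrt ((xstar - y) ⬝ᵥ Sig⁻¹.mulVec (xstar - y)) ≤ r)
    (hx2 : xstar ⬝ᵥ θhat - r * β ≤ x ⬝ᵥ θhat)
    (hy2 : xstar ⬝ᵥ θhat - r * β ≤ y ⬝ᵥ θhat) :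
    2 * (xstar ⬝ᵥ θstar) - (x + y) ⬝ᵥ θstar ≤ 4 * r * β :=
  stmt_16_general Sig hSig β r θhat θstar xstar x y hconc hx hy hx2 hy2
end
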